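/- With the same convolution setup: for I ⊆ L_n^0 with |I| ≥ 1, define Ã_{0I} = Ã_I + Σ_{ν∈I} Ã_{0ν}. Then for j ∈ I, k ∈ L_n^0 \ I, and v ∈ ℂ^N: (a) Ã_{0I}(v)_j = ((A_{0I}+μ)v)_j; (b) Ã_{0I}(v)_k = (A_I v)_k + (A_{0k} v)_I; (c) if v ∈ ker(A_{0∞} − μ) where A_{0∞} = −Σ_{ν=1}^{n-1} A_{0ν}, then Ã_{0I}(v)_{L_n^0} = (A_I v)_{L_n^0}. -/

import Mathlib

open Finset Matrix

/-- `A_I = ∑_{{p,q} ⊆ I, p < q} A_{pq}` (which is `0` when `|I| ≤ 1`). -/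
noncomputable def resSum {N : ℕ} {ι : Type*} [LinearOrder ι] [DecidableEq ι]
    (A : ι → ι → Matrix (Fin N) (Fin N) ℂ) (I : Finset ι) :
    Matrix (Fin N) (Fin N) ℂ :=
  ∑ p ∈ I, ∑ q ∈ I.filter (fun q => p < q), A p q

/-- The Haraoka convolution block matrix `Ã_{ij}` for `1 ≤ i < j ≤ n-1`
(here `i j : Fin m` with `m = n-1` label the nonzero points `i+1, j+1`):
block diagonal `A_{ij}` except for the four blocks in rows/columns `i, j`. -/
noncomputable def tAfin {m N : ℕ}
    (A : Fin (m + 1) → Fin (m + 1) → Matrix (Fin N) (Fin N) ℂ) (i j : Fin m) :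
    Matrix (Fin m × Fin N) (Fin m × Fin N) ℂ :=
  Matrix.of fun x y =>
    (if x.1 = i ∧ y.1 = i then (A i.succ j.succ + A 0 j.succ) x.2 y.2 else 0) +
    (if x.1 = i ∧ y.1 = j then (-(A 0 j.succ)) x.2 y.2 else 0) +
    (if x.1 = j ∧ y.1 = i then (-(A 0 i.succ)) x.2 y.2 else 0) +
    (if x.1 = j ∧ y.1 = j then (A i.succ j.succ + A 0 i.succ) x.2 y.2 else 0) +
    (if x.1 = y.1 ∧ x.1 ≠ i ∧ x.1 ≠ j then (A i.succ j.succ) x.2 y.2 else 0)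

/-- The Dettweiler–Reiter convolution block matrix `Ã_{0k}`:
its `k`-th block row is `(A_{01}, …, A_{0k} + μ, …, A_{0,n-1})`, zero elsewhere. -/
noncomputable def tA0 {m N : ℕ}
    (A : Fin (m + 1) → Fin (m + 1) → Matrix (Fin N) (Fin N) ℂ) (μ : ℂ) (k : Fin m) :
    Matrix (Fin m × Fin N) (Fin m × Fin N) ℂ :=
  Matrix.of fun x y =>
    if x.1 = k then
      (A 0 y.1.succ + if y.1 = k then μ • (1 : Matrix (Fin N) (Fin N) ℂ) else 0) x.2 y.2
    else 0

/-- `Ã_I = ∑_{{p,q} ⊆ I} Ã_{pq}` for `I ⊆ L_n^0 = {1,…,n-1}`. -/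
noncomputable def tRes {m N : ℕ}
    (A : Fin (m + 1) → Fin (m + 1) → Matrix (Fin N) (Fin N) ℂ) (I : Finset (Fin m)) :
    Matrix (Fin m × Fin N) (Fin m × Fin N) ℂ :=
  ∑ p ∈ I, ∑ q ∈ I.filter (fun q => p < q), tAfin A p q

/-- `(v)_j = ι_j(v)`: places `v ∈ ℂ^N` in block `j` of `ℂ^{(n-1)N}`. -/
def iotaB {m N : ℕ} (j : Fin m) (v : Fin N → ℂ) : Fin m × Fin N → ℂ :=
  fun x => if x.1 = j then v x.2 else 0

/-- `(v)_J = ∑_{j ∈ J} (v)_j`. -/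
def iotaS {m N : ℕ} (J : Finset (Fin m)) (v : Fin N → ℂ) : Fin m × Fin N → ℂ :=
  fun x => if x.1 ∈ J then v x.2 else 0
section Helpers
variable {m N : ℕ}

lemma iotaB_add (j : Fin m) (u w : Fin N → ℂ) :
    iotaB j (u + w) = iotaB j u + iotaB j w := by
  funext x; simp only [iotaB, Pi.add_apply]; split <;> simp

lemma tA0_mulVec (A : Fin (m + 1) → Fin (m + 1) → Matrix (Fin N) (Fin N) ℂ)
    (μ : ℂ) (k l : Fin m) (v : Fin N → ℂ) :
    (tA0 A μ k).mulVec (iotaB l v) =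
      iotaB k ((A 0 l.succ).mulVec v) + (if l = k then iotaB k (μ • v) else 0) := by
  funext x
  simp only [Matrix.mulVec, dotProduct, Fintype.sum_prod_type, tA0, iotaB,
    Matrix.of_apply, Pi.add_apply]
  by_cases hx : x.1 = k <;> by_cases hl : l = k <;>
    simp [hx, hl, Finset.sum_ite_eq', Matrix.mulVec, dotProduct, mul_comm,
      Matrix.one_apply, iotaB, Finset.mul_sum, add_mul, mul_add, Finset.sum_add_distrib]

lemma tAfin_mulVec (A : Fin (m + 1) → Fin (m + 1) → Matrix (Fin N) (Fin N) ℂ)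
    (i j l : Fin m) (hij : i ≠ j) (v : Fin N → ℂ) :
    (tAfin A i j).mulVec (iotaB l v) =
      if l = i then
        iotaB i ((A i.succ j.succ + A 0 j.succ).mulVec v) +
          iotaB j ((-(A 0 i.succ)).mulVec v)
      else if l = j then
        iotaB i ((-(A 0 j.succ)).mulVec v) +
          iotaB j ((A i.succ j.succ + A 0 i.succ).mulVec v)
      else iotaB l ((A i.succ j.succ).mulVec v) := by
  funext x
  simp only [Matrix.mulVec, dotProduct, Fintype.sum_prod_type, tAfin, iotaB,
    Matrix.of_apply]
  by_cases hli : l = i <;> by_cases hlj : l = j <;>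
    by_cases hxi : x.1 = i <;> by_cases hxj : x.1 = j <;>
      by_cases hxl : x.1 = l <;>
  simp_all [Finset.sum_ite_eq', Matrix.mulVec, dotProduct, mul_comm, iotaB,
    Finset.mul_sum, add_mul, mul_add, Finset.sum_add_distrib, Matrix.add_apply,
    Matrix.neg_apply]
  all_goals (intro h; subst h; simp_all)

lemma sum_mulVec {α n : Type*} [Fintype n] [DecidableEq n] (s : Finset α)
    (M : α → Matrix n n ℂ) (w : n → ℂ) :
    (∑ i ∈ s, M i).mulVec w = ∑ i ∈ s, (M i).mulVec w := by
  induction s using Finset.cons_induction with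
  | empty => simp [Matrix.mulVec]
  | cons a s ha ih => simp [Finset.sum_cons, Matrix.add_mulVec, ih]

lemma iotaB_zero (j : Fin m) : iotaB j (0 : Fin N → ℂ) = 0 := by
  funext x; simp [iotaB]

lemma iotaB_sum {α : Type*} (j : Fin m) (s : Finset α) (f : α → Fin N → ℂ) :
    iotaB j (∑ i ∈ s, f i) = ∑ i ∈ s, iotaB j (f i) := by
  funext x; simp only [iotaB, Finset.sum_apply]; split <;> simp [iotaB, *]

lemma sum_iotaB (J : Finset (Fin m)) (w : Fin N → ℂ) :
    ∑ ν ∈ J, iotaB ν w = iotaS J w := by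
  funext x; simp [iotaB, iotaS, Finset.sum_ite_eq']

lemma resSum_image (A : Fin (m + 1) → Fin (m + 1) → Matrix (Fin N) (Fin N) ℂ)
    (I : Finset (Fin m)) :
    resSum A (I.image Fin.succ) =
      ∑ p ∈ I, ∑ q ∈ I.filter (fun q => p < q), A p.succ q.succ := by
  unfold resSum
  rw [Finset.sum_image (fun a _ b _ h => Fin.succ_injective _ h)]
  refine Finset.sum_congr rfl fun p hp => ?_
  have : (I.image Fin.succ).filter (fun q => p.succ < q) =
      (I.filter (fun q => p < q)).image Fin.succ := by
    rw [Finset.filter_image]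
    congr 1
    ext q
    simp [Fin.succ_lt_succ_iff]
  rw [this, Finset.sum_image (fun a _ b _ h => Fin.succ_injective _ h)]

lemma resSum_insert_zero (A : Fin (m + 1) → Fin (m + 1) → Matrix (Fin N) (Fin N) ℂ)
    (I : Finset (Fin m)) :
    resSum A (insert 0 (I.image Fin.succ)) =
      resSum A (I.image Fin.succ) + ∑ ν ∈ I, A 0 ν.succ := by
  have h0 : (0 : Fin (m + 1)) ∉ I.image Fin.succ := by simp [Fin.succ_ne_zero, eq_comm]
  unfold resSum
  rw [Finset.sum_insert h0]
  have h1 : (insert 0 (I.image Fin.succ)).filter (fun q => (0 : Fin (m+1)) < q) =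
      I.image Fin.succ := by
    ext q
    simp only [Finset.mem_filter, Finset.mem_insert]
    constructor
    · rintro ⟨h | h, hq⟩
      · exact absurd hq (by simp [h])
      · exact h
    · intro h
      refine ⟨Or.inr h, ?_⟩
      obtain ⟨a, _, rfl⟩ := Finset.mem_image.mp h
      exact a.succ_pos
  rw [h1, Finset.sum_image (fun a _ b _ h => Fin.succ_injective _ h)]
  have h2 : ∀ p ∈ I.image Fin.succ,
      (insert 0 (I.image Fin.succ)).filter (fun q => p < q) =
        (I.image Fin.succ).filter (fun q => p < q) := by
    intro p _
    rw [Finset.filter_insert]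
    split
    · next h => exact absurd h (by simp [Fin.not_lt_zero]) -- p < 0 impossible
    · rfl
  have h3 : (∑ p ∈ I.image Fin.succ,
        ∑ q ∈ (insert 0 (I.image Fin.succ)).filter (fun q => p < q), A p q) =
      ∑ p ∈ I.image Fin.succ, ∑ q ∈ (I.image Fin.succ).filter (fun q => p < q), A p q :=
    Finset.sum_congr rfl fun p hp => by rw [h2 p hp]
  rw [h3, Finset.sum_image (fun a _ b _ h => Fin.succ_injective _ h), add_comm]

lemma tRes_mulVec_not_mem (A : Fin (m + 1) → Fin (m + 1) → Matrix (Fin N) (Fin N) ℂ)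
    (I : Finset (Fin m)) (k : Fin m) (hk : k ∉ I) (v : Fin N → ℂ) :
    (tRes A I).mulVec (iotaB k v) = iotaB k ((resSum A (I.image Fin.succ)).mulVec v) := by
  unfold tRes
  rw [_root_.sum_mulVec]
  have : ∀ p ∈ I, (∑ q ∈ I.filter (fun q => p < q), tAfin A p q).mulVec (iotaB k v) =
      ∑ q ∈ I.filter (fun q => p < q), iotaB k ((A p.succ q.succ).mulVec v) := by
    intro p hp
    rw [_root_.sum_mulVec]
    refine Finset.sum_congr rfl fun q hq => ?_
    obtain ⟨hq, hpq⟩ := Finset.mem_filter.mp hq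
    rw [tAfin_mulVec A p q k (ne_of_lt hpq)]
    rw [if_neg (fun h => hk (by rw [h]; exact hp)), if_neg (fun h => hk (by rw [h]; exact hq))]
  rw [Finset.sum_congr rfl this, resSum_image, _root_.sum_mulVec, iotaB_sum]
  exact Finset.sum_congr rfl fun p _ => by rw [_root_.sum_mulVec, iotaB_sum]

lemma tRes_mulVec_mem (A : Fin (m + 1) → Fin (m + 1) → Matrix (Fin N) (Fin N) ℂ)
    (I : Finset (Fin m)) (j : Fin m) (hj : j ∈ I) (v : Fin N → ℂ) :
    (tRes A I).mulVec (iotaB j v) =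
      iotaB j ((resSum A (I.image Fin.succ)).mulVec v) +
        ∑ ν ∈ I.erase j,
          (iotaB j ((A 0 ν.succ).mulVec v) + iotaB ν ((-(A 0 j.succ)).mulVec v)) := by
  set f : Fin m → (Fin m × Fin N → ℂ) := fun ν =>
    iotaB j ((A 0 ν.succ).mulVec v) + iotaB ν ((-(A 0 j.succ)).mulVec v) with hf
  have step1 : (tRes A I).mulVec (iotaB j v) =
      ∑ p ∈ I, ∑ q ∈ I.filter (fun q => p < q),
        (iotaB j ((A p.succ q.succ).mulVec v) +
          if j = p then f q else if j = q then f p else 0) := by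
    unfold tRes
    rw [_root_.sum_mulVec]
    refine Finset.sum_congr rfl fun p hp => ?_
    rw [_root_.sum_mulVec]
    refine Finset.sum_congr rfl fun q hq => ?_
    obtain ⟨hqI, hpq⟩ := Finset.mem_filter.mp hq
    rw [tAfin_mulVec A p q j (ne_of_lt hpq)]
    by_cases hjp : j = p
    · subst hjp
      rw [if_pos rfl, if_pos rfl, hf]
      simp only [Matrix.add_mulVec, iotaB_add]
      abel
    · rw [if_neg hjp, if_neg hjp]
      by_cases hjq : j = q
      · subst hjq
        rw [if_pos rfl, if_pos rfl, hf]
        simp only [Matrix.add_mulVec, iotaB_add]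
        abel
      · rw [if_neg hjq, if_neg hjq, add_zero]
  rw [step1]
  simp only [Finset.sum_add_distrib]
  congr 1
  · rw [resSum_image, _root_.sum_mulVec, iotaB_sum]
    exact Finset.sum_congr rfl fun p _ => by rw [_root_.sum_mulVec, iotaB_sum]
  · -- correction terms
    rw [← Finset.add_sum_erase _ _ hj]
    have hjj : ∀ q ∈ I.filter (fun q => j < q), (if j = j then f q else if j = q then f j else 0) = f q :=
      fun q _ => if_pos rfl
    rw [Finset.sum_congr rfl hjj]
    have herase : ∀ p ∈ I.erase j,
        (∑ q ∈ I.filter (fun q => p < q), if j = p then f q else if j = q then f p else 0) =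
          if p < j then f p else 0 := by
      intro p hp
      obtain ⟨hpj, hpI⟩ := Finset.mem_erase.mp hp
      rw [Finset.sum_congr rfl fun q _ => if_neg (fun h => hpj h.symm)]
      rw [Finset.sum_ite_eq (I.filter (fun q => p < q)) j (fun _ => f p)]
      simp only [Finset.mem_filter, hj, true_and]
    rw [Finset.sum_congr rfl herase, Finset.sum_ite, Finset.sum_const, smul_zero, add_zero]
    have h1 : (I.erase j).filter (fun p => p < j) = I.filter (fun p => p < j) := by
      ext a
      simp only [Finset.mem_filter, Finset.mem_erase]
      exact ⟨fun ⟨⟨_, ha⟩, hlt⟩ => ⟨ha, hlt⟩, fun ⟨ha, hlt⟩ => ⟨⟨ne_of_lt hlt, ha⟩, hlt⟩⟩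
    have h2 : (I.erase j).filter (fun p => ¬ p < j) = I.filter (fun q => j < q) := by
      ext a
      simp only [Finset.mem_filter, Finset.mem_erase]
      constructor
      · rintro ⟨⟨hne, ha⟩, hnlt⟩
        exact ⟨ha, lt_of_le_of_ne (not_lt.mp hnlt) (Ne.symm hne)⟩
      · rintro ⟨ha, hlt⟩
        exact ⟨⟨ne_of_gt hlt, ha⟩, not_lt.mpr (le_of_lt hlt)⟩
    rw [← Finset.sum_filter_add_sum_filter_not (I.erase j) (fun p => p < j) f, h1, h2, add_comm]

lemma iotaB_neg (j : Fin m) (w : Fin N → ℂ) : iotaB j (-w) = -iotaB j w := by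
  funext x; simp only [iotaB, Pi.neg_apply]; split <;> simp

lemma mulVec_sum {α n : Type*} [Fintype n] [DecidableEq n] (s : Finset α)
    (M : Matrix n n ℂ) (f : α → n → ℂ) :
    M.mulVec (∑ i ∈ s, f i) = ∑ i ∈ s, M.mulVec (f i) := by
  induction s using Finset.cons_induction with
  | empty => simp [Matrix.mulVec_zero]
  | cons a s ha ih => simp [Finset.sum_cons, Matrix.mulVec_add, ih]

/-- Action of `Ã_{0I} = Ã_I + ∑_{ν∈I} Ã_{0ν}` on block embeddings:
(a) `Ã_{0I}(v)_j = ((A_{0I}+μ)v)_j` for `j ∈ I`;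
(b) `Ã_{0I}(v)_k = (A_I v)_k + (A_{0k} v)_I` for `k ∉ I`;
(c) `Ã_{0I}(v)_{L_n^0} = (A_I v)_{L_n^0}` for `v ∈ ker(A_{0∞} - μ)`. -/
theorem tRes0_blockAction {m N : ℕ}
    (A : Fin (m + 1) → Fin (m + 1) → Matrix (Fin N) (Fin N) ℂ) (μ : ℂ)
    (hsymm : ∀ i j, A i j = A j i)
    (h4 : ∀ i j k l : Fin (m + 1), i ≠ j → i ≠ k → i ≠ l → j ≠ k → j ≠ l → k ≠ l →
      Commute (A i j) (A k l))
    (h3 : ∀ i j k : Fin (m + 1), i ≠ j → i ≠ k → j ≠ k →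
      Commute (A i j) (A i k + A j k))
    (I : Finset (Fin m)) (hI : 1 ≤ I.card) (v : Fin N → ℂ) :
    (∀ j : Fin m, j ∈ I →
        (tRes A I + ∑ ν ∈ I, tA0 A μ ν).mulVec (iotaB j v) =
          iotaB j ((resSum A (insert 0 (I.image Fin.succ))).mulVec v + μ • v)) ∧
    (∀ k : Fin m, k ∉ I →
        (tRes A I + ∑ ν ∈ I, tA0 A μ ν).mulVec (iotaB k v) =
          iotaB k ((resSum A (I.image Fin.succ)).mulVec v) +
            iotaS I ((A 0 k.succ).mulVec v)) ∧
    ((-∑ ν : Fin m, A 0 ν.succ).mulVec v = μ • v →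
        (tRes A I + ∑ ν ∈ I, tA0 A μ ν).mulVec (iotaS Finset.univ v) =
          iotaS Finset.univ ((resSum A (I.image Fin.succ)).mulVec v)) := by
  
  have hb : ∀ k : Fin m, k ∉ I →
      (tRes A I + ∑ ν ∈ I, tA0 A μ ν).mulVec (iotaB k v) =
        iotaB k ((resSum A (I.image Fin.succ)).mulVec v) +
          iotaS I ((A 0 k.succ).mulVec v) := by
    intro k hk
    rw [Matrix.add_mulVec, tRes_mulVec_not_mem A I k hk v, _root_.sum_mulVec]
    congr 1
    rw [Finset.sum_congr rfl fun ν _ => tA0_mulVec A μ ν k v, Finset.sum_add_distrib]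
    rw [Finset.sum_ite_eq I k (fun ν => iotaB ν (μ • v)), if_neg hk, add_zero, sum_iotaB]
  have ha : ∀ j : Fin m, j ∈ I →
      (tRes A I + ∑ ν ∈ I, tA0 A μ ν).mulVec (iotaB j v) =
        iotaB j ((resSum A (insert 0 (I.image Fin.succ))).mulVec v + μ • v) := by
    intro j hj
    rw [Matrix.add_mulVec, tRes_mulVec_mem A I j hj v, _root_.sum_mulVec]
    have hsum : (∑ ν ∈ I, (tA0 A μ ν).mulVec (iotaB j v)) =
        (∑ ν ∈ I, iotaB ν ((A 0 j.succ).mulVec v)) + iotaB j (μ • v) := by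
      rw [Finset.sum_congr rfl fun ν _ => tA0_mulVec A μ ν j v, Finset.sum_add_distrib]
      congr 1
      rw [Finset.sum_ite_eq I j (fun ν => iotaB ν (μ • v)), if_pos hj]
    rw [hsum, resSum_insert_zero, Matrix.add_mulVec, iotaB_add, iotaB_add,
      _root_.sum_mulVec, iotaB_sum,
      ← Finset.add_sum_erase I (fun ν => iotaB ν ((A 0 j.succ).mulVec v)) hj,
      ← Finset.add_sum_erase I (fun ν => iotaB j ((A 0 ν.succ).mulVec v)) hj,
      Finset.sum_add_distrib]
    have hcancel : (∑ ν ∈ I.erase j, iotaB ν ((-(A 0 j.succ)).mulVec v)) =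
        - ∑ ν ∈ I.erase j, iotaB ν ((A 0 j.succ).mulVec v) := by
      rw [← Finset.sum_neg_distrib]
      exact Finset.sum_congr rfl fun ν _ => by rw [Matrix.neg_mulVec, iotaB_neg]
    rw [hcancel]
    abel
  refine ⟨ha, hb, fun hker => ?_⟩
  have hS : (∑ ν : Fin m, A 0 ν.succ).mulVec v = -(μ • v) := by
    have := hker
    rw [Matrix.neg_mulVec] at this
    rw [← neg_neg ((∑ ν : Fin m, A 0 ν.succ).mulVec v), this]
  have huniv : iotaS Finset.univ v = ∑ l : Fin m, iotaB l v := (sum_iotaB _ _).symm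
  rw [huniv, _root_.mulVec_sum, ← Finset.sum_add_sum_compl I
    (fun l => (tRes A I + ∑ ν ∈ I, tA0 A μ ν).mulVec (iotaB l v))]
  rw [Finset.sum_congr rfl fun j hj => ha j hj,
    Finset.sum_congr rfl fun k hk => hb k (Finset.mem_compl.mp hk)]
  rw [Finset.sum_add_distrib]
  have hDsum : (∑ k ∈ Iᶜ, iotaS I ((A 0 k.succ).mulVec v)) =
      ∑ j ∈ I, iotaB j ((∑ k ∈ Iᶜ, A 0 k.succ).mulVec v) := by
    rw [Finset.sum_congr rfl fun k _ => (sum_iotaB I ((A 0 k.succ).mulVec v)).symm,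
      Finset.sum_comm]
    exact Finset.sum_congr rfl fun j _ => by rw [_root_.sum_mulVec, iotaB_sum]
  have hRHS : iotaS Finset.univ ((resSum A (I.image Fin.succ)).mulVec v) =
      (∑ j ∈ I, iotaB j ((resSum A (I.image Fin.succ)).mulVec v)) +
        ∑ k ∈ Iᶜ, iotaB k ((resSum A (I.image Fin.succ)).mulVec v) := by
    rw [← sum_iotaB Finset.univ, Finset.sum_add_sum_compl]
  rw [hDsum, hRHS]
  have hsplit : (∑ ν ∈ I, A 0 ν.succ).mulVec v + (∑ k ∈ Iᶜ, A 0 k.succ).mulVec v =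
      (∑ ν : Fin m, A 0 ν.succ).mulVec v := by
    rw [← Matrix.add_mulVec, Finset.sum_add_sum_compl]
  have hperj : ∀ j : Fin m, j ∈ I →
      iotaB j ((resSum A (insert 0 (I.image Fin.succ))).mulVec v + μ • v) +
        iotaB j ((∑ k ∈ Iᶜ, A 0 k.succ).mulVec v) =
      iotaB j ((resSum A (I.image Fin.succ)).mulVec v) := by
    intro j _
    rw [← iotaB_add]
    refine congrArg (iotaB j) ?_
    rw [resSum_insert_zero, Matrix.add_mulVec]
    calc (resSum A (I.image Fin.succ)).mulVec v + (∑ ν ∈ I, A 0 ν.succ).mulVec v + μ • v +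
          (∑ k ∈ Iᶜ, A 0 k.succ).mulVec v
        = (resSum A (I.image Fin.succ)).mulVec v +
            ((∑ ν ∈ I, A 0 ν.succ).mulVec v + (∑ k ∈ Iᶜ, A 0 k.succ).mulVec v) + μ • v := by
          abel
      _ = (resSum A (I.image Fin.succ)).mulVec v := by
          rw [hsplit, hS]; abel
  have hre : (∑ j ∈ I, iotaB j ((resSum A (insert 0 (I.image Fin.succ))).mulVec v + μ • v)) +
      ((∑ k ∈ Iᶜ, iotaB k ((resSum A (I.image Fin.succ)).mulVec v)) +
        ∑ j ∈ I, iotaB j ((∑ k ∈ Iᶜ, A 0 k.succ).mulVec v)) =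
      (∑ j ∈ I, (iotaB j ((resSum A (insert 0 (I.image Fin.succ))).mulVec v + μ • v) +
          iotaB j ((∑ k ∈ Iᶜ, A 0 k.succ).mulVec v))) +
        ∑ k ∈ Iᶜ, iotaB k ((resSum A (I.image Fin.succ)).mulVec v) := by
    rw [Finset.sum_add_distrib]; abel
  rw [hre, Finset.sum_congr rfl hperj]
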